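/- Let b ~ N(β, se²) with se > 0, β ≠ 0, and let c > 0. The relative conditional bias (E(|b| ∣ |b|/se > c) − |β|)/|β| is strictly positive and the exaggeration factor E(|b| ∣ |b|/se > c)/|β| is strictly greater than 1. Both quantities depend on β and se only through the signal-to-noise ratio SNR = |β|/se; both are decreasing functions of the SNR and increasing functions of c. -/

import Mathlib

open MeasureTheory ProbabilityTheory

/-- The Gaussian distribution with mean `m` and standard deviation `s`. -/
noncomputable def gauss (m s : ℝ) : Measure ℝ := gaussianReal m (Real.toNNReal (s ^ 2))

/-- The conditional mean `E(|b| ∣ |b|/se > c)` for `b ~ N(β, se²)`, where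
`E(X ∣ A) = E(X·1_A)/P(A)`. -/
noncomputable def condMean (β se c : ℝ) : ℝ :=
  (∫ x in {x : ℝ | c < |x| / se}, |x| ∂(gauss β se))
    / ((gauss β se) {x : ℝ | c < |x| / se}).toReal

/-- The relative conditional bias `(E(|b| ∣ |b|/se > c) − |β|)/|β|`. -/
noncomputable def relBias (β se c : ℝ) : ℝ := (condMean β se c - |β|) / |β|

/-- The exaggeration factor (type M error) `E(|b| ∣ |b|/se > c)/|β|`. -/
noncomputable def exagg (β se c : ℝ) : ℝ := condMean β se c / |β|

/-!
Standardise: `b = se · Z` with `Z ~ N(m, 1)`, `m = β / se`, so the conditional mean is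
`se · M(m, c)` with `M(m, c) = E(|Z| ∣ |Z| > c) = A / B`, `A = E(|Z|; |Z| > c)`,
`B = P(|Z| > c)`. Splitting `|Z| > c` into its two tails gives `A` and `B` in closed form through
the standard normal density `φ` and tail `Q`, and shows that `M` is even in `m`; hence the
exaggeration factor is `M(s, c) / s` with `s` the SNR, and the relative bias is that minus one.
Mills' inequality `t Q(t) < φ(t)` yields `c B < A` and `s B < A`. Since `∂_c A = c ∂_c B` and
`∂_c B < 0`, `∂_c M` has the sign of `A - c B > 0`; and `c B < A` together with
`φ(c - s) ≥ φ(c + s)` makes the numerator of `∂_s (A / (s B))` negative.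
-/

open Real Set Filter Topology

noncomputable def stdNormalPDF (x : ℝ) : ℝ := (√(2 * π))⁻¹ * exp (-x ^ 2 / 2)

noncomputable def stdNormalTail (t : ℝ) : ℝ := ∫ x in Ioi t, stdNormalPDF x

lemma gaussianPDFReal_zero_one : gaussianPDFReal 0 1 = stdNormalPDF := by
  ext x; simp [gaussianPDFReal, stdNormalPDF]

lemma stdNormalPDF_pos (x : ℝ) : 0 < stdNormalPDF x := by
  unfold stdNormalPDF; positivity

lemma stdNormalPDF_neg (x : ℝ) : stdNormalPDF (-x) = stdNormalPDF x := by
  simp [stdNormalPDF]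

lemma stdNormalPDF_le_of_sq_le {x y : ℝ} (h : x ^ 2 ≤ y ^ 2) : stdNormalPDF y ≤ stdNormalPDF x := by
  unfold stdNormalPDF; gcongr

lemma continuous_stdNormalPDF : Continuous stdNormalPDF := by
  unfold stdNormalPDF; fun_prop

lemma integrable_stdNormalPDF : Integrable stdNormalPDF :=
  gaussianPDFReal_zero_one ▸ integrable_gaussianPDFReal 0 1

lemma integrable_mul_stdNormalPDF : Integrable fun x ↦ x * stdNormalPDF x := by
  refine ((integrable_mul_exp_neg_mul_sq (by norm_num : (0 : ℝ) < 1 / 2)).const_mul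
    (√(2 * π))⁻¹).congr (.of_forall fun x ↦ ?_)
  simp only [stdNormalPDF]; ring_nf

lemma hasDerivAt_stdNormalPDF (x : ℝ) : HasDerivAt stdNormalPDF (-(x * stdNormalPDF x)) x := by
  have h := (((hasDerivAt_pow 2 x).fun_neg.div_const 2).exp).const_mul (√(2 * π))⁻¹
  refine h.congr_deriv ?_
  simp only [stdNormalPDF]; ring

lemma tendsto_stdNormalPDF_atTop : Tendsto stdNormalPDF atTop (𝓝 0) := by
  have h : Tendsto (fun x : ℝ ↦ -x ^ 2 / 2) atTop atBot :=
    (tendsto_neg_atTop_atBot.comp (tendsto_pow_atTop two_ne_zero)).atBot_div_const two_pos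
  have := (tendsto_exp_atBot.comp h).const_mul (√(2 * π))⁻¹
  rwa [mul_zero] at this

lemma integral_Ioi_mul_stdNormalPDF (t : ℝ) :
    ∫ x in Ioi t, x * stdNormalPDF x = stdNormalPDF t := by
  have h := integral_Ioi_of_hasDerivAt_of_tendsto' (f := fun y ↦ -stdNormalPDF y) (a := t)
    (fun x _ ↦ (hasDerivAt_stdNormalPDF x).neg.congr_deriv (neg_neg _))
    integrable_mul_stdNormalPDF.integrableOn tendsto_stdNormalPDF_atTop.neg
  simpa using h

lemma integral_Ioi_add_mul_stdNormalPDF (t k : ℝ) :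
    ∫ x in Ioi t, (x + k) * stdNormalPDF x = stdNormalPDF t + k * stdNormalTail t := by
  simp_rw [add_mul]
  rw [integral_add integrable_mul_stdNormalPDF.integrableOn
    (integrable_stdNormalPDF.const_mul k).integrableOn, integral_const_mul,
    integral_Ioi_mul_stdNormalPDF, stdNormalTail]

lemma stdNormalTail_pos (t : ℝ) : 0 < stdNormalTail t := by
  rw [stdNormalTail, setIntegral_pos_iff_support_of_nonneg_ae
    (.of_forall fun x ↦ (stdNormalPDF_pos x).le) integrable_stdNormalPDF.integrableOn,
    Function.support_eq_univ fun x ↦ (stdNormalPDF_pos x).ne', univ_inter]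
  simp

lemma antitone_stdNormalTail : Antitone stdNormalTail := fun _ _ hab ↦
  setIntegral_mono_set integrable_stdNormalPDF.integrableOn
    (.of_forall fun x ↦ (stdNormalPDF_pos x).le) (Ioi_subset_Ioi hab).eventuallyLE

lemma stdNormalTail_eq_sub_integral (t : ℝ) :
    stdNormalTail t = stdNormalTail 0 - ∫ x in (0 : ℝ)..t, stdNormalPDF x := by
  have split : ∀ a b : ℝ, a ≤ b →
      stdNormalTail a = (∫ x in a..b, stdNormalPDF x) + stdNormalTail b := fun a b hab ↦ by
    rw [intervalIntegral.integral_of_le hab, stdNormalTail, stdNormalTail,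
      ← setIntegral_union (Ioc_disjoint_Ioi le_rfl) measurableSet_Ioi
        integrable_stdNormalPDF.integrableOn integrable_stdNormalPDF.integrableOn,
      Ioc_union_Ioi_eq_Ioi hab]
  rcases le_total 0 t with h | h
  · rw [split 0 t h]; ring
  · rw [split t 0 h, intervalIntegral.integral_symm]; ring

lemma hasDerivAt_stdNormalTail (t : ℝ) : HasDerivAt stdNormalTail (-stdNormalPDF t) t := by
  have h := intervalIntegral.integral_hasDerivAt_right
    (continuous_stdNormalPDF.intervalIntegrable 0 t)
    (continuous_stdNormalPDF.stronglyMeasurableAtFilter _ _) continuous_stdNormalPDF.continuousAt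
  rw [funext stdNormalTail_eq_sub_integral]
  exact h.const_sub _

lemma mul_stdNormalTail_lt_stdNormalPDF (t : ℝ) : t * stdNormalTail t < stdNormalPDF t := by
  have hpos : 0 < ∫ x in Ioi t, (x + -t) * stdNormalPDF x := by
    rw [setIntegral_pos_iff_support_of_nonneg_ae]
    · rw [inter_eq_self_of_subset_right fun x hx ↦ Function.mem_support.mpr
        (mul_ne_zero (by linarith [mem_Ioi.mp hx] : 0 < x + -t).ne' (stdNormalPDF_pos x).ne')]
      simp
    · filter_upwards [ae_restrict_mem measurableSet_Ioi] with x hx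
      exact mul_nonneg (by linarith [mem_Ioi.mp hx]) (stdNormalPDF_pos x).le
    · exact (integrable_mul_stdNormalPDF.add (integrable_stdNormalPDF.const_mul (-t))).integrableOn
        |>.congr_fun (fun x _ ↦ by simp only [Pi.add_apply]; ring) measurableSet_Ioi
  rw [integral_Ioi_add_mul_stdNormalPDF] at hpos
  linarith

/- For `Z ~ N(m, 1)` and `c ≥ 0`: `P(|Z| > c)`, `E(|Z|; |Z| > c)` and `E(|Z| ∣ |Z| > c)`. -/
noncomputable def absTailProb (m c : ℝ) : ℝ := stdNormalTail (c - m) + stdNormalTail (c + m)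

noncomputable def absTailIntegral (m c : ℝ) : ℝ :=
  stdNormalPDF (c - m) + stdNormalPDF (c + m) + m * (stdNormalTail (c - m) - stdNormalTail (c + m))

noncomputable def absTailMean (m c : ℝ) : ℝ := absTailIntegral m c / absTailProb m c

lemma setIntegral_gaussianReal_zero_one {s : Set ℝ} (hs : MeasurableSet s) (f : ℝ → ℝ) :
    ∫ x in s, f x ∂gaussianReal 0 1 = ∫ x in s, f x * stdNormalPDF x := by
  rw [gaussianReal_of_var_ne_zero 0 one_ne_zero, restrict_withDensity hs,
    integral_withDensity_eq_integral_toReal_smul (measurable_gaussianPDF _ _)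
      (ae_of_all _ fun _ ↦ gaussianPDF_lt_top)]
  simp [toReal_gaussianPDF, gaussianPDFReal_zero_one, mul_comm]

lemma setOf_lt_abs_add {c : ℝ} (m : ℝ) :
    {x : ℝ | c < |x + m|} = Iio (-c - m) ∪ Ioi (c - m) := by
  ext x
  change c < |x + m| ↔ x < -c - m ∨ c - m < x
  rw [lt_abs]
  constructor <;> rintro (h | h) <;> first | (left; linarith) | (right; linarith)

lemma setIntegral_lt_abs_add_mul_stdNormalPDF {c : ℝ} (hc : 0 ≤ c) (m : ℝ) {f : ℝ → ℝ}
    (hf : Integrable fun x ↦ f x * stdNormalPDF x) :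
    ∫ x in {x | c < |x + m|}, f x * stdNormalPDF x =
      (∫ x in Ioi (c + m), f (-x) * stdNormalPDF x) + ∫ x in Ioi (c - m), f x * stdNormalPDF x := by
  have hdisj : Disjoint (Iio (-c - m)) (Ioi (c - m)) :=
    disjoint_left.mpr fun x (h₁ : x < -c - m) (h₂ : c - m < x) ↦ by linarith
  rw [setOf_lt_abs_add, setIntegral_union hdisj measurableSet_Ioi hf.integrableOn hf.integrableOn,
    ← integral_Iic_eq_integral_Iio, show -c - m = -(c + m) by ring, ← integral_comp_neg_Ioi]
  simp only [stdNormalPDF_neg]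

lemma measureReal_lt_abs_add_gaussianReal {c : ℝ} (hc : 0 ≤ c) (m : ℝ) :
    (gaussianReal 0 1).real {x | c < |x + m|} = absTailProb m c := by
  have h := setIntegral_gaussianReal_zero_one (measurableSet_lt measurable_const (by fun_prop))
    (fun _ ↦ (1 : ℝ)) (s := {x | c < |x + m|})
  rw [setIntegral_const, smul_eq_mul, mul_one] at h
  rw [h, setIntegral_lt_abs_add_mul_stdNormalPDF hc m (by simpa using integrable_stdNormalPDF)]
  simp only [one_mul, absTailProb, stdNormalTail, add_comm]

lemma setIntegral_lt_abs_add_gaussianReal {c : ℝ} (hc : 0 ≤ c) (m : ℝ) :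
    ∫ x in {x | c < |x + m|}, |x + m| ∂gaussianReal 0 1 = absTailIntegral m c := by
  have hint : Integrable fun x ↦ |x + m| * stdNormalPDF x := by
    refine (integrable_mul_stdNormalPDF.add (integrable_stdNormalPDF.const_mul m)).abs.congr
      (.of_forall fun x ↦ ?_)
    simp only [Pi.add_apply, ← add_mul, abs_mul, abs_of_pos (stdNormalPDF_pos x)]
  rw [setIntegral_gaussianReal_zero_one (measurableSet_lt measurable_const (by fun_prop)),
    setIntegral_lt_abs_add_mul_stdNormalPDF hc m hint,
    setIntegral_congr_fun measurableSet_Ioi (g := fun x ↦ (x + -m) * stdNormalPDF x)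
      fun x (hx : c + m < x) ↦ by rw [abs_of_neg (by linarith)]; ring,
    setIntegral_congr_fun measurableSet_Ioi (g := fun x ↦ (x + m) * stdNormalPDF x)
      fun x (hx : c - m < x) ↦ by rw [abs_of_pos (by linarith)],
    integral_Ioi_add_mul_stdNormalPDF, integral_Ioi_add_mul_stdNormalPDF, absTailIntegral]
  ring

lemma gauss_eq_map (β se : ℝ) : gauss β se = (gaussianReal 0 1).map (fun x ↦ se * x + β) := by
  rw [show (fun x ↦ se * x + β) = (· + β) ∘ (se * ·) from rfl,
    ← Measure.map_map (by fun_prop) (by fun_prop), gaussianReal_map_const_mul,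
    gaussianReal_map_add_const, gauss]
  congr 1
  · ring
  · ext; simp [sq_nonneg]

lemma condMean_eq_mul_absTailMean (β : ℝ) {se c : ℝ} (hse : 0 < se) (hc : 0 ≤ c) :
    condMean β se c = se * absTailMean (β / se) c := by
  have habs (x : ℝ) : |se * x + β| = se * |x + β / se| := by
    rw [show se * x + β = se * (x + β / se) by field_simp, abs_mul, abs_of_pos hse]
  have hpre : (fun x ↦ se * x + β) ⁻¹' {y | c < |y| / se} = {x | c < |x + β / se|} := by
    ext x
    change c < |se * x + β| / se ↔ c < |x + β / se|
    rw [habs, mul_div_cancel_left₀ _ hse.ne']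
  have hS : MeasurableSet {y : ℝ | c < |y| / se} := measurableSet_lt measurable_const (by fun_prop)
  have hg : Measurable fun x : ℝ ↦ se * x + β := by fun_prop
  rw [condMean, gauss_eq_map, setIntegral_map hS (by fun_prop) hg.aemeasurable,
    Measure.map_apply hg hS, hpre, ← measureReal_def]
  simp only [habs]
  rw [integral_const_mul, setIntegral_lt_abs_add_gaussianReal hc,
    measureReal_lt_abs_add_gaussianReal hc, absTailMean, mul_div_assoc]

lemma absTailProb_pos (m c : ℝ) : 0 < absTailProb m c :=
  add_pos (stdNormalTail_pos _) (stdNormalTail_pos _)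

lemma absTailMean_abs (m c : ℝ) : absTailMean |m| c = absTailMean m c := by
  rcases abs_choice m with h | h
  · rw [h]
  · simp only [h, absTailMean, absTailIntegral, absTailProb, sub_neg_eq_add, ← sub_eq_add_neg]
    ring_nf

lemma mul_absTailProb_lt_absTailIntegral (m c : ℝ) : c * absTailProb m c < absTailIntegral m c := by
  have h₁ := mul_stdNormalTail_lt_stdNormalPDF (c - m)
  have h₂ := mul_stdNormalTail_lt_stdNormalPDF (c + m)
  simp only [absTailProb, absTailIntegral]
  linarith

lemma lt_absTailMean (m : ℝ) {c : ℝ} (hc : 0 ≤ c) : m < absTailMean m c := by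
  rw [absTailMean, lt_div_iff₀ (absTailProb_pos m c)]
  suffices 2 * m * stdNormalTail (c + m) < stdNormalPDF (c - m) + stdNormalPDF (c + m) by
    simp only [absTailProb, absTailIntegral]; linarith
  have hQ := stdNormalTail_pos (c + m)
  have hMills := mul_stdNormalTail_lt_stdNormalPDF (c + m)
  -- if `m > c`, write `2m = (c + m) + (m - c)` and use Mills' inequality also at `m - c`
  rcases le_or_gt m c with hmc | hmc
  · nlinarith [stdNormalPDF_pos (c - m)]
  · have hQ' : stdNormalTail (c + m) ≤ stdNormalTail (m - c) := antitone_stdNormalTail (by linarith)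
    have hMills' := mul_stdNormalTail_lt_stdNormalPDF (m - c)
    rw [← stdNormalPDF_neg, neg_sub] at hMills'
    nlinarith

lemma hasDerivAt_absTailProb_mean (m c : ℝ) :
    HasDerivAt (absTailProb · c) (stdNormalPDF (c - m) - stdNormalPDF (c + m)) m := by
  have h := ((hasDerivAt_stdNormalTail (c - m)).comp_const_sub c m).add
    ((hasDerivAt_stdNormalTail (c + m)).comp_const_add c m)
  exact h.congr_deriv (by ring)

lemma hasDerivAt_absTailIntegral_mean (m c : ℝ) :
    HasDerivAt (absTailIntegral · c) (stdNormalTail (c - m) - stdNormalTail (c + m) +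
      c * (stdNormalPDF (c - m) - stdNormalPDF (c + m))) m := by
  have h := (((hasDerivAt_stdNormalPDF (c - m)).comp_const_sub c m).add
    ((hasDerivAt_stdNormalPDF (c + m)).comp_const_add c m)).fun_add ((hasDerivAt_id' m).fun_mul
      (((hasDerivAt_stdNormalTail (c - m)).comp_const_sub c m).fun_sub
        ((hasDerivAt_stdNormalTail (c + m)).comp_const_add c m)))
  exact h.congr_deriv (by ring)

lemma hasDerivAt_absTailProb_threshold (m c : ℝ) :
    HasDerivAt (absTailProb m) (-(stdNormalPDF (c - m) + stdNormalPDF (c + m))) c := by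
  have h := ((hasDerivAt_stdNormalTail (c - m)).comp_sub_const c m).add
    ((hasDerivAt_stdNormalTail (c + m)).comp_add_const c m)
  exact h.congr_deriv (by ring)

lemma hasDerivAt_absTailIntegral_threshold (m c : ℝ) :
    HasDerivAt (absTailIntegral m) (-(c * (stdNormalPDF (c - m) + stdNormalPDF (c + m)))) c := by
  have h := (((hasDerivAt_stdNormalPDF (c - m)).comp_sub_const c m).add
    ((hasDerivAt_stdNormalPDF (c + m)).comp_add_const c m)).add ((hasDerivAt_const c m).mul
      (((hasDerivAt_stdNormalTail (c - m)).comp_sub_const c m).sub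
        ((hasDerivAt_stdNormalTail (c + m)).comp_add_const c m)))
  exact h.congr_deriv (by ring)

lemma strictMono_absTailMean (m : ℝ) : StrictMono (absTailMean m) := by
  refine strictMono_of_deriv_pos fun c ↦ ?_
  have hB := absTailProb_pos m c
  have hs := add_pos (stdNormalPDF_pos (c - m)) (stdNormalPDF_pos (c + m))
  have hgap := mul_absTailProb_lt_absTailIntegral m c
  change 0 < deriv (fun c ↦ absTailIntegral m c / absTailProb m c) c
  rw [((hasDerivAt_absTailIntegral_threshold m c).fun_div (hasDerivAt_absTailProb_threshold m c)
    hB.ne').deriv]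
  apply div_pos _ (by positivity)
  nlinarith

lemma strictAntiOn_absTailMean_div {c : ℝ} (hc : 0 ≤ c) :
    StrictAntiOn (fun m ↦ absTailMean m c / m) (Ioi 0) := by
  have hderiv (m : ℝ) (hm : 0 < m) := (hasDerivAt_absTailIntegral_mean m c).fun_div
    ((hasDerivAt_id' m).fun_mul (hasDerivAt_absTailProb_mean m c))
    (mul_pos hm (absTailProb_pos m c)).ne'
  have hfun : (fun m ↦ absTailMean m c / m) =
      fun m ↦ absTailIntegral m c / (m * absTailProb m c) := by
    ext m; rw [absTailMean, div_div, mul_comm]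
  rw [hfun]
  refine strictAntiOn_of_deriv_neg (convex_Ioi 0)
    (fun m hm ↦ (hderiv m hm).continuousAt.continuousWithinAt) fun m hm ↦ ?_
  rw [interior_Ioi] at hm
  have hm : 0 < m := hm
  rw [(hderiv m hm).deriv]
  apply div_neg_of_neg_of_pos _ (by positivity [absTailProb_pos m c])
  have hφ : 0 ≤ stdNormalPDF (c - m) - stdNormalPDF (c + m) :=
    sub_nonneg.mpr (stdNormalPDF_le_of_sq_le (by nlinarith))
  -- the numerator is `m (φ(c - m) - φ(c + m)) (c B - A) - (φ(c - m) + φ(c + m)) B`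
  have h₁ : 0 ≤ m * (stdNormalPDF (c - m) - stdNormalPDF (c + m)) *
      (absTailIntegral m c - c * absTailProb m c) :=
    mul_nonneg (mul_nonneg hm.le hφ) (sub_pos.mpr (mul_absTailProb_lt_absTailIntegral m c)).le
  have h₂ : 0 < (stdNormalPDF (c - m) + stdNormalPDF (c + m)) * absTailProb m c :=
    mul_pos (add_pos (stdNormalPDF_pos _) (stdNormalPDF_pos _)) (absTailProb_pos m c)
  simp only [absTailIntegral] at h₁ ⊢
  linarith

lemma exagg_eq_absTailMean_div {β se c : ℝ} (hse : 0 < se) (hc : 0 ≤ c) :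
    exagg β se c = absTailMean (|β| / se) c / (|β| / se) := by
  rw [exagg, condMean_eq_mul_absTailMean β hse hc, ← absTailMean_abs, abs_div, abs_of_pos hse,
    div_div_eq_mul_div, mul_comm, mul_div_assoc]

lemma relBias_eq_exagg_sub_one {β : ℝ} (se c : ℝ) (hβ : β ≠ 0) :
    relBias β se c = exagg β se c - 1 := by
  rw [relBias, exagg, sub_div, div_self (abs_ne_zero.mpr hβ)]

/-- For `b ~ N(β, se²)` with `se > 0`, `β ≠ 0`, `c > 0`: the relative conditional
bias is strictly positive and the exaggeration factor exceeds 1; both depend on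
`(β, se)` only through the SNR `|β|/se`; both are decreasing in the SNR and
increasing in `c`. -/
theorem relBias_and_exagg_properties :
    (∀ β se c : ℝ, 0 < se → β ≠ 0 → 0 < c →
      0 < relBias β se c ∧ 1 < exagg β se c) ∧
    (∀ β₁ se₁ β₂ se₂ c : ℝ, 0 < se₁ → β₁ ≠ 0 → 0 < se₂ → β₂ ≠ 0 → 0 < c →
      |β₁| / se₁ = |β₂| / se₂ →
      relBias β₁ se₁ c = relBias β₂ se₂ c ∧ exagg β₁ se₁ c = exagg β₂ se₂ c) ∧
    (∀ β₁ se₁ β₂ se₂ c : ℝ, 0 < se₁ → β₁ ≠ 0 → 0 < se₂ → β₂ ≠ 0 → 0 < c →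
      |β₁| / se₁ ≤ |β₂| / se₂ →
      relBias β₂ se₂ c ≤ relBias β₁ se₁ c ∧ exagg β₂ se₂ c ≤ exagg β₁ se₁ c) ∧
    (∀ β se c₁ c₂ : ℝ, 0 < se → β ≠ 0 → 0 < c₁ → c₁ ≤ c₂ →
      relBias β se c₁ ≤ relBias β se c₂ ∧ exagg β se c₁ ≤ exagg β se c₂) := by
  have snr_pos {β se : ℝ} (hse : 0 < se) (hβ : β ≠ 0) : 0 < |β| / se :=
    div_pos (abs_pos.mpr hβ) hse
  refine ⟨fun β se c hse hβ hc ↦ ?_, fun β₁ se₁ β₂ se₂ c hse₁ hβ₁ hse₂ hβ₂ hc hsnr ↦ ?_,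
    fun β₁ se₁ β₂ se₂ c hse₁ hβ₁ hse₂ hβ₂ hc hsnr ↦ ?_, fun β se c₁ c₂ hse hβ hc₁ hc ↦ ?_⟩
  · have h : 1 < exagg β se c := by
      rw [exagg_eq_absTailMean_div hse hc.le, one_lt_div (snr_pos hse hβ)]
      exact lt_absTailMean _ hc.le
    rw [relBias_eq_exagg_sub_one se c hβ]
    exact ⟨sub_pos.mpr h, h⟩
  · have h : exagg β₁ se₁ c = exagg β₂ se₂ c := by
      rw [exagg_eq_absTailMean_div hse₁ hc.le, exagg_eq_absTailMean_div hse₂ hc.le, hsnr]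
    rw [relBias_eq_exagg_sub_one se₁ c hβ₁, relBias_eq_exagg_sub_one se₂ c hβ₂, h]
    exact ⟨rfl, rfl⟩
  · have h : exagg β₂ se₂ c ≤ exagg β₁ se₁ c := by
      rw [exagg_eq_absTailMean_div hse₁ hc.le, exagg_eq_absTailMean_div hse₂ hc.le]
      exact (strictAntiOn_absTailMean_div hc.le).antitoneOn (snr_pos hse₁ hβ₁)
        (snr_pos hse₂ hβ₂) hsnr
    rw [relBias_eq_exagg_sub_one se₁ c hβ₁, relBias_eq_exagg_sub_one se₂ c hβ₂]
    exact ⟨sub_le_sub_right h 1, h⟩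
  · have h : exagg β se c₁ ≤ exagg β se c₂ := by
      rw [exagg_eq_absTailMean_div hse hc₁.le, exagg_eq_absTailMean_div hse (hc₁.le.trans hc)]
      exact div_le_div_of_nonneg_right ((strictMono_absTailMean _).monotone hc)
        (snr_pos hse hβ).le
    rw [relBias_eq_exagg_sub_one se c₁ hβ, relBias_eq_exagg_sub_one se c₂ hβ]
    exact ⟨sub_le_sub_right h 1, h⟩
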